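/- arXiv:2107.05273 — 5 statements merged into one kernel-verified Lean document; each statement's English description precedes it below -/
import Mathlib

section
/- Let G be a group and let {E_γ}_{γ∈Γ} be a finite family of pairwise disjoint finite subsets of G. Then for any finite K ⊆ G, each element of G belongs to ∂_K E_γ for at most |K| many indices γ; consequently, ∑_{γ∈Γ} |∂_K E_γ| ≤ |K| · |⋃_{γ∈Γ} ∂_K E_γ|. -/
/-!
If `t ∈ ∂_K E_γ`, some `k ∈ K` has `k * t ∈ E_γ`; as the `E_γ` are disjoint, distinct
indices need distinct such `k`, so `t` lies in at most `|K|` of the boundaries. Summing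
`|∂_K E_γ|` counts each point of the union with this multiplicity.
-/

/-- The `K`-boundary of a subset `F` of a group `G`. -/
def kBoundary {G : Type*} [Group G] (K F : Set G) : Set G :=
  {t | (∃ k ∈ K, k * t ∈ F) ∧ (∃ k ∈ K, k * t ∉ F)}

open Function Pointwise

open Finset in
theorem Finset.sum_card_le_mul_card_biUnion {ι α : Type*} [DecidableEq α] {s : Finset ι}
    {B : ι → Finset α} {n : ℕ} (h : ∀ a, #{i ∈ s | a ∈ B i} ≤ n) :
    ∑ i ∈ s, #(B i) ≤ n * #(s.biUnion B) := by
  calc ∑ i ∈ s, #(B i) = ∑ i ∈ s, ∑ a ∈ s.biUnion B, if a ∈ B i then 1 else 0 := by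
        refine sum_congr rfl fun i hi => ?_
        rw [sum_boole, Nat.cast_id, filter_mem_eq_inter,
          inter_eq_right.2 (subset_biUnion_of_mem B hi)]
    _ = ∑ a ∈ s.biUnion B, #{i ∈ s | a ∈ B i} := by
        rw [sum_comm]; simp only [sum_boole, Nat.cast_id]
    _ ≤ n * #(s.biUnion B) := by
        rw [mul_comm, ← smul_eq_mul]; exact sum_le_card_nsmul _ _ _ fun a _ => h a

theorem Set.sum_ncard_le_mul_ncard_iUnion {ι α : Type*} [Fintype ι] {B : ι → Set α}
    (hB : ∀ i, (B i).Finite) {n : ℕ} (h : ∀ a, {i | a ∈ B i}.ncard ≤ n) :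
    ∑ i, (B i).ncard ≤ n * (⋃ i, B i).ncard := by
  classical
  lift B to ι → Finset α using hB
  have hU : (⋃ i, (B i : Set α)) = ↑(Finset.univ.biUnion B) := by simp
  simp only [Set.ncard_coe_finset, hU]
  refine Finset.sum_card_le_mul_card_biUnion fun a => ?_
  simpa [← Set.ncard_coe_finset] using h a

theorem Set.encard_setOf_inter_nonempty_le {ι α : Type*} {E : ι → Set α}
    (hE : Pairwise (Disjoint on E)) (S : Set α) :
    {i | (S ∩ E i).Nonempty}.encard ≤ S.encard := by
  let f : {i | (S ∩ E i).Nonempty} → S := fun i => ⟨i.2.some, i.2.some_mem.1⟩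
  refine ENat.card_le_card_of_injective (f := f) fun i j hij => ?_
  by_contra hne
  have hj : (f i : α) ∈ E j := hij ▸ (j.2.some_mem.2 : (f j : α) ∈ E j)
  exact Set.disjoint_left.1 (hE (Subtype.coe_injective.ne hne)) i.2.some_mem.2 hj

theorem kBoundary_subset_inv_mul {G : Type*} [Group G] (K F : Set G) :
    kBoundary K F ⊆ K⁻¹ * F := by
  rintro t ⟨⟨k, hk, hkt⟩, -⟩
  exact ⟨k⁻¹, Set.inv_mem_inv.2 hk, k * t, hkt, by group⟩

theorem Set.Finite.kBoundary {G : Type*} [Group G] {K F : Set G} (hK : K.Finite)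
    (hF : F.Finite) : (kBoundary K F).Finite :=
  (hK.inv.mul hF).subset (kBoundary_subset_inv_mul K F)

theorem encard_setOf_mem_kBoundary_le {G Γ : Type*} [Group G] (K : Set G) {E : Γ → Set G}
    (hE : Pairwise (Disjoint on E)) (t : G) :
    {γ | t ∈ kBoundary K (E γ)}.encard ≤ K.encard :=
  calc {γ | t ∈ kBoundary K (E γ)}.encard
      ≤ {γ | ((· * t) '' K ∩ E γ).Nonempty}.encard :=
        Set.encard_le_encard fun _ ⟨⟨k, hk, hkt⟩, _⟩ => ⟨k * t, ⟨k, hk, rfl⟩, hkt⟩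
    _ ≤ ((· * t) '' K).encard := Set.encard_setOf_inter_nonempty_le hE _
    _ = K.encard := (mul_left_injective t).encard_image K

theorem ncard_setOf_mem_kBoundary_le {G Γ : Type*} [Group G] {K : Set G} (hK : K.Finite)
    {E : Γ → Set G} (hE : Pairwise (Disjoint on E)) (t : G) :
    {γ | t ∈ kBoundary K (E γ)}.ncard ≤ K.ncard :=
  ENat.toNat_le_toNat (encard_setOf_mem_kBoundary_le K hE t) hK.encard_lt_top.ne

/-- For a finite family of pairwise disjoint finite subsets `E γ` of a group `G` and
finite `K ⊆ G`: each element of `G` lies in `∂_K E_γ` for at most `|K|` indices `γ`,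
and consequently `∑_γ |∂_K E_γ| ≤ |K| · |⋃_γ ∂_K E_γ|`. -/
theorem sum_boundary_le_card_mul {G : Type*} [Group G] {Γ : Type*} [Fintype Γ]
    (K : Set G) (hK : K.Finite) (E : Γ → Set G) (hE : ∀ γ, (E γ).Finite)
    (hdisj : Pairwise fun γ₁ γ₂ => Disjoint (E γ₁) (E γ₂)) :
    (∀ t : G, ({γ : Γ | t ∈ kBoundary K (E γ)}).ncard ≤ K.ncard) ∧
      ∑ γ : Γ, (kBoundary K (E γ)).ncard ≤ K.ncard * (⋃ γ, kBoundary K (E γ)).ncard :=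
  have hmult := ncard_setOf_mem_kBoundary_le hK hdisj
  ⟨hmult, Set.sum_ncard_le_mul_ncard_iUnion (fun γ => hK.kBoundary (hE γ)) hmult⟩
end

section
/- Let G be a group, H a subgroup, and S a finite subset of G. Partition S as S = ⨆_{g ∈ R} B_g g where R is a set of representatives for the right cosets of H in G and B_g ⊆ H. If K' ⊆ H is a finite set containing e with |K'| > 1/δ for some δ > 0, and S is (K', δ)-invariant, then the union of those pieces B_g g with 0 < |B_g| < 1/δ has total cardinality at most δ|S|. -/
open Set

/-- `F` is `(K, δ)`-invariant if `|∂_K F| ≤ δ |F|`. -/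
def FolnerInvariant {G : Type*} [Group G] (K F : Set G) (δ : ℝ) : Prop :=
  ((kBoundary K F).ncard : ℝ) ≤ δ * F.ncard

/-!
Left multiplication by `K' ⊆ H` keeps `b g` inside its right coset `H g`, and `S` meets that
coset exactly in the piece `B_g g`. If `|B_g| < 1/δ < |K'|`, the translates `K' b g` cannot all
lie in that piece, while `1 · b g ∈ S`; so `b g ∈ ∂_{K'} S`. Hence the small pieces all lie in
`∂_{K'} S`, whose size is at most `δ |S|`.
-/

section

variable {G : Type*} [Group G]

lemma kBoundary_finite {K F : Set G} (hK : K.Finite) (hF : F.Finite) :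
    (kBoundary K F).Finite :=
  (hK.image2 (fun k s => k⁻¹ * s) hF).subset <| by
    rintro t ⟨⟨k, hk, hkt⟩, -⟩
    exact ⟨k, hk, k * t, hkt, by group⟩

lemma mem_kBoundary_of_ncard_lt {K F : Set G} {t : G} (hK : 1 ∈ K) (ht : t ∈ F)
    (hlt : ((· * t) '' K ∩ F).ncard < K.ncard) : t ∈ kBoundary K F := by
  refine ⟨⟨1, hK, by rwa [one_mul]⟩, ?_⟩
  by_contra! hKF
  rw [inter_eq_left.mpr (image_subset_iff.mpr hKF),
    ncard_image_of_injective _ (mul_left_injective t)] at hlt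
  exact lt_irrefl _ hlt

variable {H : Subgroup G} {R : Finset G} {B : G → Set G}

lemma mul_mem_biUnion_iff (hBH : ∀ g ∈ R, B g ⊆ (H : Set G))
    (hR : ∀ g₁ ∈ R, ∀ g₂ ∈ R, g₁ ≠ g₂ → g₁ * g₂⁻¹ ∉ H) {g h : G} (hg : g ∈ R) (hh : h ∈ H) :
    h * g ∈ ⋃ g' ∈ R, (· * g') '' B g' ↔ h ∈ B g := by
  simp only [mem_iUnion, mem_image, exists_prop]
  constructor
  · rintro ⟨g', hg', b, hb, hbg⟩
    obtain rfl : g' = g := by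
      by_contra hne
      refine hR g' hg' g hg hne ?_
      have : g' * g⁻¹ = b⁻¹ * h :=
        calc g' * g⁻¹ = b⁻¹ * (b * g') * g⁻¹ := by group
          _ = b⁻¹ * h := by rw [hbg]; group
      rw [this]
      exact H.mul_mem (H.inv_mem (hBH g' hg' hb)) hh
    rwa [← mul_right_cancel hbg]
  · exact fun hb => ⟨g, hg, h, hb, rfl⟩

lemma biUnion_small_pieces_subset_kBoundary (hBH : ∀ g ∈ R, B g ⊆ (H : Set G))
    (hR : ∀ g₁ ∈ R, ∀ g₂ ∈ R, g₁ ≠ g₂ → g₁ * g₂⁻¹ ∉ H) {K : Set G} (hKH : K ⊆ (H : Set G))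
    (hK : 1 ∈ K) {c : ℝ} (hc : c < K.ncard) :
    ⋃ g ∈ {g ∈ R | 0 < (B g).ncard ∧ ((B g).ncard : ℝ) < c}, (· * g) '' B g ⊆
      kBoundary K (⋃ g ∈ R, (· * g) '' B g) := by
  intro t ht
  simp only [mem_iUnion, mem_image, Finset.mem_filter, exists_prop] at ht
  obtain ⟨g, ⟨hg, hpos, hsmall⟩, b, hb, rfl⟩ := ht
  have hbH := hBH g hg hb
  refine mem_kBoundary_of_ncard_lt hK ((mul_mem_biUnion_iff hBH hR hg hbH).2 hb) ?_
  have hsub : (· * (b * g)) '' K ∩ ⋃ g ∈ R, (· * g) '' B g ⊆ (· * g) '' B g := by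
    rintro _ ⟨⟨k, hk, rfl⟩, hkS⟩
    refine ⟨k * b, (mul_mem_biUnion_iff hBH hR hg (H.mul_mem (hKH hk) hbH)).1 ?_, mul_assoc ..⟩
    rwa [mul_assoc]
  have hle := ncard_le_ncard hsub ((finite_of_ncard_pos hpos).image _)
  rw [ncard_image_of_injective _ (mul_left_injective g)] at hle
  exact_mod_cast (Nat.cast_le.mpr hle).trans_lt (hsmall.trans hc)

end

theorem small_coset_pieces_general {G : Type*} [Group G] (H : Subgroup G)
    (S : Set G) (hS : S.Finite) (R : Finset G) (B : G → Set G)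
    (hBH : ∀ g ∈ R, B g ⊆ (H : Set G))
    (hpart : S = ⋃ g ∈ R, (fun h => h * g) '' B g)
    (hcosets : ∀ g₁ ∈ R, ∀ g₂ ∈ R, g₁ ≠ g₂ → g₁ * g₂⁻¹ ∉ H)
    (K' : Set G) (hK'H : K' ⊆ (H : Set G)) (hK'fin : K'.Finite) (he : (1 : G) ∈ K')
    (δ : ℝ) (hK'big : 1 / δ < (K'.ncard : ℝ))
    (hinv : FolnerInvariant K' S δ) :
    ((⋃ g ∈ {g ∈ R | 0 < (B g).ncard ∧ ((B g).ncard : ℝ) < 1 / δ},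
        (fun h => h * g) '' B g).ncard : ℝ) ≤ δ * S.ncard := by
  have hsmall := biUnion_small_pieces_subset_kBoundary hBH hcosets hK'H he hK'big
  rw [← hpart] at hsmall
  calc _ ≤ ((kBoundary K' S).ncard : ℝ) :=
        Nat.cast_le.mpr (ncard_le_ncard hsmall (kBoundary_finite hK'fin hS))
    _ ≤ δ * S.ncard := hinv

/-- Let `S` be a finite subset of `G` partitioned as `S = ⨆_{g ∈ R} B_g g` where the
elements of `R` represent distinct right cosets of a subgroup `H` and `B_g ⊆ H`.
If `K' ⊆ H` is finite with `e ∈ K'` and `|K'| > 1/δ`, and `S` is `(K', δ)`-invariant,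
then the union of the pieces `B_g g` with `0 < |B_g| < 1/δ` has cardinality at most `δ|S|`. -/
theorem small_coset_pieces {G : Type*} [Group G] (H : Subgroup G)
    (S : Set G) (hS : S.Finite) (R : Finset G) (B : G → Set G)
    (hBH : ∀ g ∈ R, B g ⊆ (H : Set G)) (hBfin : ∀ g ∈ R, (B g).Finite)
    (hpart : S = ⋃ g ∈ R, (fun h => h * g) '' B g)
    (hdisj : ∀ g₁ ∈ R, ∀ g₂ ∈ R, g₁ ≠ g₂ →
      Disjoint ((fun h => h * g₁) '' B g₁) ((fun h => h * g₂) '' B g₂))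
    (hcosets : ∀ g₁ ∈ R, ∀ g₂ ∈ R, g₁ ≠ g₂ → g₁ * g₂⁻¹ ∉ H)
    (K' : Set G) (hK'H : K' ⊆ (H : Set G)) (hK'fin : K'.Finite) (he : (1 : G) ∈ K')
    (δ : ℝ) (hδ : 0 < δ) (hK'big : 1 / δ < (K'.ncard : ℝ))
    (hinv : FolnerInvariant K' S δ) :
    ((⋃ g ∈ {g ∈ R | 0 < (B g).ncard ∧ ((B g).ncard : ℝ) < 1 / δ},
        (fun h => h * g) '' B g).ncard : ℝ) ≤ δ * S.ncard :=
  small_coset_pieces_general H S hS R B hBH hpart hcosets K' hK'H hK'fin he δ hK'big hinv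
end

section
/- Let 0 < δ < 1 and let S be a finite subset of a group G partitioned as S = ⨆_{g∈R} B_g g with B_g ⊆ H for a subgroup H and right-coset representatives R. For each g choose B'_g ⊆ B_g with |B'_g| = ⌈(δ/(1-δ))|B_g|⌉, and let L be the set of g with 0 < |B_g| < 1/δ. If ∑_{g∈L} |B_g| ≤ δ|S|, then S' = ⨆_{g∈R} B'_g g satisfies |S'| ≤ 3δ|S|. -/
open Set

/-!
Bound `|S'|` by `∑ |B'_g|` and split the sum. A block `g ∈ L` contributes at most `|B_g|`,
and these add up to at most `δ|S|` by hypothesis. Every other nonempty block has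
`|B_g| ≥ 1/δ`, and then `⌈δ/(1-δ)|B_g|⌉ ≤ 2δ|B_g|`; these add up to at most `2δ|S|`
because the translates `B_g g` partition `S`.
-/

/- If the ceiling is at most `2`, use `1 ≤ δx`; otherwise `⌈y⌉ < y + 1 < 3y/2`, and
`3y/2 ≤ 2δx` because `y (1 - δ) = δx` and `δ ≤ 1/4`. -/
theorem natCeil_div_one_sub_mul_le {δ x : ℝ} (hδ0 : 0 < δ) (hδ : δ ≤ 1 / 4)
    (hx : 1 ≤ δ * x) : (⌈δ / (1 - δ) * x⌉₊ : ℝ) ≤ 2 * δ * x := by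
  set y := δ / (1 - δ) * x with hy
  have h1δ : 0 < 1 - δ := by linarith
  have hy0 : 0 ≤ y := by
    have : 0 ≤ x := nonneg_of_mul_nonneg_right (by linarith) hδ0
    positivity
  rcases le_or_gt y 2 with hy2 | hy2
  · have : (⌈y⌉₊ : ℝ) ≤ 2 := by exact_mod_cast Nat.ceil_le.mpr hy2
    linarith
  · have hyδ : y * (1 - δ) = δ * x := by rw [hy]; field_simp
    nlinarith [Nat.ceil_lt_add_one hy0]

theorem natCeil_div_one_sub_mul_natCast_le {δ : ℝ} (hδ0 : 0 < δ) (hδ : δ ≤ 1 / 4) {n : ℕ}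
    (hn : 0 < n → 1 / δ ≤ n) : (⌈δ / (1 - δ) * n⌉₊ : ℝ) ≤ 2 * δ * n := by
  rcases Nat.eq_zero_or_pos n with rfl | hpos
  · simp
  · refine natCeil_div_one_sub_mul_le hδ0 hδ ?_
    rw [← div_le_iff₀' hδ0]
    exact hn hpos

theorem Finset.sum_le_sum_filter_add_mul_sum {ι : Type*} (s : Finset ι) (p : ι → Prop)
    [DecidablePred p] {f g : ι → ℝ} {c : ℝ} (hg : ∀ i ∈ s, 0 ≤ g i) (hc : 0 ≤ c)
    (hp : ∀ i ∈ s.filter p, f i ≤ g i) (hnp : ∀ i ∈ s.filter (¬ p ·), f i ≤ c * g i) :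
    ∑ i ∈ s, f i ≤ ∑ i ∈ s.filter p, g i + c * ∑ i ∈ s, g i := calc
  ∑ i ∈ s, f i = ∑ i ∈ s.filter p, f i + ∑ i ∈ s.filter (¬ p ·), f i :=
    (s.sum_filter_add_sum_filter_not p f).symm
  _ ≤ ∑ i ∈ s.filter p, g i + c * ∑ i ∈ s.filter (¬ p ·), g i := by
    rw [Finset.mul_sum]
    exact add_le_add (Finset.sum_le_sum hp) (Finset.sum_le_sum hnp)
  _ ≤ ∑ i ∈ s.filter p, g i + c * ∑ i ∈ s, g i := by
    gcongr
    · exact fun i hi _ => hg i hi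
    · exact Finset.filter_subset _ s

section RightTranslates

variable {ι G : Type*} [Mul G] [IsRightCancelMul G] (R : Finset ι) (t : ι → G)
  (A : ι → Set G)

theorem ncard_biUnion_image_mul_right_le :
    (⋃ i ∈ R, (· * t i) '' A i).ncard ≤ ∑ i ∈ R, (A i).ncard := by
  simpa only [ncard_image_of_injective _ (mul_left_injective _)]
    using R.set_ncard_biUnion_le fun i => (· * t i) '' A i

theorem ncard_biUnion_image_mul_right (hA : ∀ i ∈ R, (A i).Finite)
    (hdisj : (R : Set ι).PairwiseDisjoint fun i => (· * t i) '' A i) :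
    (⋃ i ∈ R, (· * t i) '' A i).ncard = ∑ i ∈ R, (A i).ncard := by
  have := R.finite_toSet.ncard_biUnion (fun i hi => (hA i hi).image (· * t i)) hdisj
  rw [finsum_mem_coe_finset] at this
  simpa only [Finset.mem_coe, ncard_image_of_injective _ (mul_left_injective _)] using this

end RightTranslates

theorem shaved_set_small_general {G : Type*} [Group G]
    (δ : ℝ) (hδ0 : 0 < δ) (hδ1 : δ < 1 / 12)
    (S : Set G) (R : Finset G) (B B' : G → Set G)
    (hBfin : ∀ g ∈ R, (B g).Finite)
    (hpart : S = ⋃ g ∈ R, (fun h => h * g) '' B g)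
    (hdisj : ∀ g₁ ∈ R, ∀ g₂ ∈ R, g₁ ≠ g₂ →
      Disjoint ((fun h => h * g₁) '' B g₁) ((fun h => h * g₂) '' B g₂))
    (hB' : ∀ g ∈ R, B' g ⊆ B g)
    (hB'card : ∀ g ∈ R, ((B' g).ncard : ℝ) = ⌈δ / (1 - δ) * ((B g).ncard : ℝ)⌉₊)
    (hL : ∑ g ∈ R.filter (fun g => 0 < (B g).ncard ∧ ((B g).ncard : ℝ) < 1 / δ),
        ((B g).ncard : ℝ) ≤ δ * S.ncard) :
    ((⋃ g ∈ R, (fun h => h * g) '' B' g).ncard : ℝ) ≤ 3 * δ * S.ncard := by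
  classical
  set p : G → Prop := fun g => 0 < (B g).ncard ∧ ((B g).ncard : ℝ) < 1 / δ
  have hS_card : (S.ncard : ℝ) = ∑ g ∈ R, ((B g).ncard : ℝ) := by
    rw [hpart]
    exact_mod_cast ncard_biUnion_image_mul_right R (fun g => g) B hBfin
      fun g₁ h₁ g₂ h₂ => hdisj g₁ h₁ g₂ h₂
  have hsmall : ∀ g ∈ R.filter p, ((B' g).ncard : ℝ) ≤ (B g).ncard := by
    intro g hg
    have hgR := (Finset.mem_filter.mp hg).1
    exact_mod_cast ncard_le_ncard (hB' g hgR) (hBfin g hgR)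
  have hlarge : ∀ g ∈ R.filter (¬ p ·), ((B' g).ncard : ℝ) ≤ 2 * δ * (B g).ncard := by
    intro g hg
    obtain ⟨hgR, hgp⟩ := Finset.mem_filter.mp hg
    rw [hB'card g hgR]
    exact natCeil_div_one_sub_mul_natCast_le hδ0 (by linarith)
      fun hpos => not_lt.mp fun h => hgp ⟨hpos, h⟩
  calc ((⋃ g ∈ R, (fun h => h * g) '' B' g).ncard : ℝ)
      ≤ ∑ g ∈ R, ((B' g).ncard : ℝ) := by
        exact_mod_cast ncard_biUnion_image_mul_right_le R (fun g => g) B'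
    _ ≤ ∑ g ∈ R.filter p, ((B g).ncard : ℝ) + 2 * δ * ∑ g ∈ R, ((B g).ncard : ℝ) :=
        R.sum_le_sum_filter_add_mul_sum p (fun _ _ => by positivity) (by positivity) hsmall hlarge
    _ ≤ δ * S.ncard + 2 * δ * S.ncard := by rw [← hS_card]; gcongr
    _ = 3 * δ * S.ncard := by ring

/-- Let `0 < δ < 1/12` and let `S` be a finite subset of `G` partitioned as
`S = ⨆_{g∈R} B_g g` with `B_g ⊆ H`. For each `g` choose `B'_g ⊆ B_g` with
`|B'_g| = ⌈(δ/(1-δ))|B_g|⌉`, and let `L` be the set of `g ∈ R` with `0 < |B_g| < 1/δ`.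
If `∑_{g∈L} |B_g| ≤ δ|S|`, then `S' = ⨆_{g∈R} B'_g g` satisfies `|S'| ≤ 3δ|S|`. -/
theorem shaved_set_small {G : Type*} [Group G] (H : Subgroup G)
    (δ : ℝ) (hδ0 : 0 < δ) (hδ1 : δ < 1 / 12)
    (S : Set G) (hS : S.Finite) (R : Finset G) (B B' : G → Set G)
    (hBH : ∀ g ∈ R, B g ⊆ (H : Set G)) (hBfin : ∀ g ∈ R, (B g).Finite)
    (hpart : S = ⋃ g ∈ R, (fun h => h * g) '' B g)
    (hdisj : ∀ g₁ ∈ R, ∀ g₂ ∈ R, g₁ ≠ g₂ →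
      Disjoint ((fun h => h * g₁) '' B g₁) ((fun h => h * g₂) '' B g₂))
    (hB' : ∀ g ∈ R, B' g ⊆ B g)
    (hB'card : ∀ g ∈ R, ((B' g).ncard : ℝ) = ⌈δ / (1 - δ) * ((B g).ncard : ℝ)⌉₊)
    (hL : ∑ g ∈ R.filter (fun g => 0 < (B g).ncard ∧ ((B g).ncard : ℝ) < 1 / δ),
        ((B g).ncard : ℝ) ≤ δ * S.ncard) :
    ((⋃ g ∈ R, (fun h => h * g) '' B' g).ncard : ℝ) ≤ 3 * δ * S.ncard :=
  shaved_set_small_general δ hδ0 hδ1 S R B B' hBfin hpart hdisj hB' hB'card hL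
end

section
/- Let G be an amenable group, 0 < ε < 1/2, K ⊆ G finite, and δ > 0. Then there exists a finite collection 𝓕 of (K, δ)-invariant finite subsets of G containing the identity such that every finite subset E ⊆ G that is (⋃𝓕, ε/4)-invariant contains an 𝓕-tileable subset E' with |E'| ≥ (1−ε)|E|. -/
open Set

/-- `G` is amenable: for every finite `K ⊆ G` and `δ > 0` there is a nonempty
finite `(K, δ)`-invariant subset of `G`. -/
def AmenableGroup (G : Type*) [Group G] : Prop :=
  ∀ K : Set G, K.Finite → ∀ δ : ℝ, 0 < δ →
    ∃ F : Set G, F.Finite ∧ F.Nonempty ∧ FolnerInvariant K F δ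

/-- `A ⊆ G` is `𝓕`-tileable: there are `T ⊆ G` and `F_t ∈ 𝓕` for `t ∈ T` such that
the translates `F_t t` for `t ∈ T` partition `A`. -/
def Tileable {G : Type*} [Group G] (𝓕 : Set (Set G)) (A : Set G) : Prop :=
  ∃ (T : Set G) (Ft : G → Set G), (∀ t ∈ T, Ft t ∈ 𝓕) ∧
    (A = ⋃ t ∈ T, (fun s => s * t) '' Ft t) ∧
    (T.PairwiseDisjoint fun t => (fun s => s * t) '' Ft t)

open Pointwise

namespace OW
variable {G : Type*} [Group G] [DecidableEq G]

lemma kB_finite {K F : Set G} (hK : K.Finite) (hF : F.Finite) : (kBoundary K F).Finite := by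
  apply Set.Finite.subset (hK.biUnion (fun k _ => hF.image (fun x => k⁻¹ * x)))
  rintro t ⟨⟨k, hk, hkt⟩, -⟩
  exact Set.mem_biUnion hk ⟨k * t, hkt, by group⟩

lemma kB_translate (K F : Set G) (g : G) :
    kBoundary K ((fun s => s * g) '' F) = (fun s => s * g) '' kBoundary K F := by
  ext t
  constructor
  · rintro ⟨⟨k, hk, hkt⟩, ⟨k', hk', hkt'⟩⟩
    refine ⟨t * g⁻¹, ⟨⟨k, hk, ?_⟩, ⟨k', hk', ?_⟩⟩, by group⟩
    · obtain ⟨x, hx, hxe⟩ := hkt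
      have : x = k * (t * g⁻¹) := by rw [← mul_assoc]; rw [← hxe]; group
      rwa [← this]
    · intro hmem
      exact hkt' ⟨k' * (t * g⁻¹), hmem, by group⟩
  · rintro ⟨s, ⟨⟨k, hk, hkt⟩, ⟨k', hk', hkt'⟩⟩, rfl⟩
    refine ⟨⟨k, hk, ⟨k * s, hkt, by group⟩⟩, ⟨k', hk', ?_⟩⟩
    rintro ⟨x, hx, hxe⟩
    have : x = k' * s := by
      have h3 : x * g = k' * (s * g) := hxe
      have h4 : x * g * g⁻¹ = k' * (s * g) * g⁻¹ := by rw [h3]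
      simpa [mul_assoc] using h4
    exact hkt' (this ▸ hx)

lemma folner_translate {K F : Set G} {δ : ℝ} (h : FolnerInvariant K F δ) (hδ : 0 ≤ δ) (g : G) :
    FolnerInvariant K ((fun s => s * g) '' F) δ := by
  unfold FolnerInvariant at *
  rw [kB_translate, Set.ncard_image_of_injective _ (fun a b => by simp),
    Set.ncard_image_of_injective _ (fun a b => by simp)]
  exact h

/-- Finset version of the boundary. -/
noncomputable def fb (K F : Finset G) : Finset G :=
  (kB_finite K.finite_toSet F.finite_toSet).toFinset

lemma mem_fb {K F : Finset G} {t : G} :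
    t ∈ fb K F ↔ (∃ k ∈ K, k * t ∈ F) ∧ (∃ k ∈ K, k * t ∉ F) := by
  simp [fb, kBoundary]

lemma fb_card_eq (K F : Finset G) : (fb K F).card = (kBoundary (K : Set G) (F : Set G)).ncard := by
  rw [Set.ncard_eq_toFinset_card _ (kB_finite K.finite_toSet F.finite_toSet)]
  rfl

lemma fb_mono {K K' : Finset G} (F : Finset G) (h : K ⊆ K') : fb K F ⊆ fb K' F := by
  intro t ht
  rw [mem_fb] at *
  obtain ⟨⟨k, hk, h1⟩, ⟨k', hk', h2⟩⟩ := ht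
  exact ⟨⟨k, h hk, h1⟩, ⟨k', h hk', h2⟩⟩

lemma fb_union_subset (K A B : Finset G) : fb K (A ∪ B) ⊆ fb K A ∪ fb K B := by
  intro t ht
  rw [mem_fb] at ht
  obtain ⟨⟨k, hk, h1⟩, ⟨k', hk', h2⟩⟩ := ht
  simp only [Finset.mem_union] at h1 h2
  push_neg at h2
  simp only [Finset.mem_union, mem_fb]
  rcases h1 with h1 | h1
  · exact Or.inl ⟨⟨k, hk, h1⟩, ⟨k', hk', h2.1⟩⟩
  · exact Or.inr ⟨⟨k, hk, h1⟩, ⟨k', hk', h2.2⟩⟩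

lemma fb_sdiff_subset (K A B : Finset G) : fb K (A \ B) ⊆ fb K A ∪ fb K B := by
  intro t ht
  rw [mem_fb] at ht
  obtain ⟨⟨k, hk, h1⟩, ⟨k', hk', h2⟩⟩ := ht
  simp only [Finset.mem_sdiff] at h1 h2
  push_neg at h2
  simp only [Finset.mem_union, mem_fb]
  by_cases hc : k' * t ∈ A
  · exact Or.inr ⟨⟨k', hk', h2 hc⟩, ⟨k, hk, h1.2⟩⟩
  · exact Or.inl ⟨⟨k, hk, h1.1⟩, ⟨k', hk', hc⟩⟩

lemma fb_card_le (K F : Finset G) : (fb K F).card ≤ K.card * F.card := by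
  have hsub : fb K F ⊆ K.biUnion (fun k => F.image (fun x => k⁻¹ * x)) := by
    intro t ht
    rw [mem_fb] at ht
    obtain ⟨⟨k, hk, h1⟩, -⟩ := ht
    exact Finset.mem_biUnion.2 ⟨k, hk, Finset.mem_image.2 ⟨k * t, h1, by group⟩⟩

  calc (fb K F).card ≤ _ := Finset.card_le_card hsub
    _ ≤ ∑ k ∈ K, (F.image (fun x => k⁻¹ * x)).card := Finset.card_biUnion_le
    _ ≤ ∑ k ∈ K, F.card := Finset.sum_le_sum (fun k _ => Finset.card_image_le)
    _ = K.card * F.card := by rw [Finset.sum_const, smul_eq_mul]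

lemma mem_mul_single {F : Finset G} {g a : G} : a ∈ F * {g} ↔ a * g⁻¹ ∈ F := by
  rw [Finset.mul_singleton]
  constructor
  · intro h; obtain ⟨x, hx, rfl⟩ := Finset.mem_image.1 h; simpa
  · intro h; exact Finset.mem_image.2 ⟨a * g⁻¹, h, by simp⟩

lemma fb_mul_singleton (K F : Finset G) (g : G) : fb K (F * {g}) = (fb K F) * {g} := by
  ext t
  rw [mem_mul_single, mem_fb, mem_fb]
  simp only [mem_mul_single, ← mul_assoc]

lemma card_mul_singleton (F : Finset G) (g : G) : (F * {g}).card = F.card := by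
  rw [Finset.mul_singleton]
  exact Finset.card_image_of_injective _ (fun a b h => by simpa using h)



/-- shape invariance -/
lemma shape_invariant (K Fk F' : Finset G) (δ ε₀ : ℝ) (hδ : 0 < δ)
    (hKε : (K.card : ℝ) * ε₀ ≤ δ / 4) (hε₀half : ε₀ ≤ 1 / 2)
    (hFol : ((fb K Fk).card : ℝ) ≤ (δ / 4) * Fk.card)
    (hsub : F' ⊆ Fk) (hcard : (1 - ε₀) * (Fk.card : ℝ) ≤ (F'.card : ℝ)) :
    ((fb K F').card : ℝ) ≤ δ * F'.card := by
  have hFk0 : (0:ℝ) ≤ (Fk.card:ℝ) := Nat.cast_nonneg _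
  have hd : F' = Fk \ (Fk \ F') := by
    ext a
    simp only [Finset.mem_sdiff]
    constructor
    · intro ha; exact ⟨hsub ha, fun h => h.2 ha⟩
    · intro ⟨h1, h2⟩; by_contra hc; exact h2 ⟨h1, hc⟩
  have h1 : (fb K F').card ≤ (fb K Fk).card + (fb K (Fk \ F')).card := by
    calc (fb K F').card ≤ (fb K Fk ∪ fb K (Fk \ F')).card :=
          Finset.card_le_card (by nth_rewrite 1 [hd]; exact fb_sdiff_subset _ _ _)
      _ ≤ _ := Finset.card_union_le _ _
  have h2 : ((Fk \ F').card : ℝ) ≤ ε₀ * Fk.card := by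
    rw [Finset.card_sdiff_of_subset hsub, Nat.cast_sub (Finset.card_le_card hsub)]
    linarith
  have h3 : ((fb K (Fk \ F')).card : ℝ) ≤ (K.card : ℝ) * ((Fk \ F').card : ℝ) := by
    exact_mod_cast fb_card_le K (Fk \ F')
  have h4 : ((fb K F').card : ℝ) ≤ (δ/4) * Fk.card + (K.card : ℝ) * (ε₀ * Fk.card) := by
    have := h1
    have h5 : ((fb K (Fk \ F')).card : ℝ) ≤ (K.card : ℝ) * (ε₀ * Fk.card) := by
      calc ((fb K (Fk \ F')).card : ℝ) ≤ (K.card : ℝ) * ((Fk \ F').card : ℝ) := h3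
        _ ≤ (K.card : ℝ) * (ε₀ * Fk.card) := by
            apply mul_le_mul_of_nonneg_left h2 (Nat.cast_nonneg _)
    calc ((fb K F').card : ℝ) ≤ ((fb K Fk).card : ℝ) + ((fb K (Fk \ F')).card : ℝ) := by
          exact_mod_cast h1
      _ ≤ (δ/4) * Fk.card + (K.card : ℝ) * (ε₀ * Fk.card) := by linarith
  have h6 : (K.card : ℝ) * (ε₀ * Fk.card) ≤ (δ/4) * Fk.card := by
    rw [← mul_assoc]
    exact mul_le_mul_of_nonneg_right hKε hFk0
  have h7 : (δ/2) * Fk.card ≤ δ * F'.card := by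
    have : (1/2 : ℝ) * Fk.card ≤ F'.card := by nlinarith
    nlinarith
  linarith

/-- union of cores of a greedy list -/
def CU (L : List (G × Finset G)) : Finset G := L.foldr (fun p s => p.2 ∪ s) ∅
/-- union of tiles of a greedy list -/
def TU (F : Finset G) (L : List (G × Finset G)) : Finset G :=
  L.foldr (fun p s => F * {p.1} ∪ s) ∅

lemma mem_CU {L : List (G × Finset G)} {a : G} : a ∈ CU L ↔ ∃ p ∈ L, a ∈ p.2 := by
  induction L with
  | nil => simp [CU]
  | cons p L ih =>
    show a ∈ p.2 ∪ CU L ↔ _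
    rw [Finset.mem_union, ih]
    constructor
    · rintro (h | ⟨q, hq, h⟩)
      · exact ⟨p, List.mem_cons_self, h⟩
      · exact ⟨q, List.mem_cons_of_mem _ hq, h⟩
    · rintro ⟨q, hq, h⟩
      rcases List.mem_cons.1 hq with rfl | hq
      · exact Or.inl h
      · exact Or.inr ⟨q, hq, h⟩

/-- Goodness of a greedy list -/
def Good (ε₀ : ℝ) (F B : Finset G) (L : List (G × Finset G)) : Prop :=
  (∀ p ∈ L, F * {p.1} ⊆ B ∧ p.2 ⊆ F * {p.1} ∧ (1 - ε₀) * (F.card : ℝ) ≤ (p.2.card : ℝ)) ∧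
  L.Pairwise (fun p q => Disjoint p.2 q.2) ∧
  CU L = TU F L ∧
  (1 - ε₀) * (L.length * (F.card : ℝ)) ≤ ((CU L).card : ℝ)

lemma Good.cu_subset {ε₀ : ℝ} {F B : Finset G} {L : List (G × Finset G)}
    (h : Good ε₀ F B L) : CU L ⊆ B := by
  intro a ha
  obtain ⟨p, hp, hap⟩ := mem_CU.1 ha
  exact (h.1 p hp).1 ((h.1 p hp).2.1 hap)

lemma Good.len_le {ε₀ : ℝ} (hε₀1 : ε₀ < 1) {F B : Finset G} (hF1 : (1:G) ∈ F)
    {L : List (G × Finset G)} (h : Good ε₀ F B L) :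
    (L.length : ℝ) ≤ (B.card : ℝ) / (1 - ε₀) := by
  have h1 : (0:ℝ) < 1 - ε₀ := by linarith
  have hF : (1:ℝ) ≤ (F.card : ℝ) := by
    exact_mod_cast Finset.card_pos.2 ⟨1, hF1⟩
  have h2 : ((CU L).card : ℝ) ≤ B.card := by
    exact_mod_cast Finset.card_le_card h.cu_subset
  have h3 := h.2.2.2
  rw [le_div_iff₀ h1]
  nlinarith [Nat.cast_nonneg (α := ℝ) L.length]

/-- The greedy lemma: a maximal ε₀-disjoint family of tiles. -/
lemma greedy (ε₀ : ℝ) (hε₀ : 0 < ε₀) (hε₀1 : ε₀ < 1) (F B : Finset G) (hF1 : (1:G) ∈ F) :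
    ∃ L : List (G × Finset G), Good ε₀ F B L ∧
      ε₀ * ((B.card : ℝ) - ((fb F B).card : ℝ)) ≤ ((CU L).card : ℝ) := by
  classical
  have h1 : (0:ℝ) < 1 - ε₀ := by linarith
  have hFc : (1:ℝ) ≤ (F.card : ℝ) := by exact_mod_cast Finset.card_pos.2 ⟨1, hF1⟩
  set P : ℕ → Prop := fun n => ∃ L : List (G × Finset G), Good ε₀ F B L ∧ L.length = n with hP
  have hP0 : P 0 := ⟨[], ⟨by simp, List.Pairwise.nil, rfl, by simp [CU]⟩, rfl⟩
  set M : ℕ := Nat.ceil ((B.card : ℝ) / (1 - ε₀)) with hM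
  have hlenM : ∀ L : List (G × Finset G), Good ε₀ F B L → L.length ≤ M := by
    intro L hL
    have h := (hL.len_le hε₀1 hF1).trans (Nat.le_ceil _)
    exact_mod_cast h
  obtain ⟨L, hL, hLlen⟩ := Nat.findGreatest_spec (P := P) (Nat.zero_le M) hP0
  set A : Finset G := CU L with hA
  -- maximality
  have hmax : ∀ t : G, F * {t} ⊆ B → ε₀ * (F.card : ℝ) ≤ (((F * {t}) ∩ A).card : ℝ) := by
    intro t ht
    by_contra hcon
    push_neg at hcon
    set core : Finset G := (F * {t}) \ A with hcore
    have hdisj : Disjoint core A := Finset.sdiff_disjoint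
    have hcard : (core.card : ℝ) = (F.card : ℝ) - (((F * {t}) ∩ A).card : ℝ) := by
      have := Finset.card_sdiff_add_card_inter (F * {t}) A
      have h2 : core.card + ((F * {t}) ∩ A).card = F.card := by
        rw [hcore, this, card_mul_singleton]
      have := congrArg (Nat.cast (R := ℝ)) h2
      push_cast at this
      linarith
    have hGood' : Good ε₀ F B ((t, core) :: L) := by
      refine ⟨?_, ?_, ?_, ?_⟩
      · intro p hp
        rcases List.mem_cons.1 hp with rfl | hp
        · refine ⟨ht, Finset.sdiff_subset, by rw [hcard]; linarith⟩
        · exact hL.1 p hp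
      · rw [List.pairwise_cons]
        refine ⟨fun q hq => hdisj.mono_right ?_, hL.2.1⟩
        intro a ha
        exact mem_CU.2 ⟨q, hq, ha⟩
      · show core ∪ CU L = F * {t} ∪ TU F L
        rw [← hL.2.2.1, hcore, ← hA, Finset.sdiff_union_self_eq_union]
      · have hd2 : Disjoint core (CU L) := by rw [← hA]; exact hdisj
        have he : CU ((t, core) :: L) = core ∪ CU L := rfl
        rw [he, Finset.card_union_of_disjoint hd2, List.length_cons]
        push_cast
        have h3 := hL.2.2.2
        have hA2 : ((CU L).card : ℝ) = (A.card : ℝ) := by rw [hA]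
        nlinarith [hcard, hcon]
    have : L.length + 1 ≤ Nat.findGreatest P M :=
      Nat.le_findGreatest (by
        have := hlenM _ hGood'
        simpa using this) ⟨(t, core) :: L, hGood', by simp⟩
    omega
  -- counting
  set Int : Finset G := B.filter (fun t => F * {t} ⊆ B) with hInt
  have hcount1 : ε₀ * (F.card : ℝ) * (Int.card : ℝ) ≤
      ∑ t ∈ Int, (((F * {t}) ∩ A).card : ℝ) := by
    calc ε₀ * (F.card : ℝ) * (Int.card : ℝ) = ∑ _t ∈ Int, ε₀ * (F.card : ℝ) := by
          rw [Finset.sum_const, nsmul_eq_mul]; ring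
      _ ≤ _ := Finset.sum_le_sum (fun t ht => hmax t (Finset.mem_filter.1 ht).2)
  have hcount2 : ∑ t ∈ Int, ((F * {t}) ∩ A).card ≤ A.card * F.card := by
    have e1 : ∀ t : G, ((F * {t}) ∩ A).card = (A.filter (fun a => a ∈ F * {t})).card := by
      intro t
      rw [Finset.filter_mem_eq_inter, Finset.inter_comm]
    calc ∑ t ∈ Int, ((F * {t}) ∩ A).card
        = ∑ t ∈ Int, ∑ a ∈ A, (if a ∈ F * {t} then 1 else 0) := by
          refine Finset.sum_congr rfl (fun t _ => ?_)
          rw [e1 t, Finset.card_filter]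
      _ = ∑ a ∈ A, ∑ t ∈ Int, (if a ∈ F * {t} then 1 else 0) := Finset.sum_comm
      _ ≤ ∑ _a ∈ A, F.card := by
          refine Finset.sum_le_sum (fun a _ => ?_)
          rw [← Finset.card_filter]
          refine le_trans (Finset.card_le_card (fun t htm => ?_)) (Finset.card_image_le (s := F) (f := fun f => f⁻¹ * a))
          have := (Finset.mem_filter.1 htm).2
          rw [mem_mul_single] at this
          exact Finset.mem_image.2 ⟨a * t⁻¹, this, by group⟩
      _ = A.card * F.card := by rw [Finset.sum_const, smul_eq_mul]
  have hIntA : ε₀ * (Int.card : ℝ) ≤ (A.card : ℝ) := by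
    have h2 : (∑ t ∈ Int, (((F * {t}) ∩ A).card : ℝ)) ≤ (A.card : ℝ) * (F.card : ℝ) := by
      exact_mod_cast hcount2
    nlinarith
  have hBInt : (B.card : ℝ) - ((fb F B).card : ℝ) ≤ (Int.card : ℝ) := by
    have hsub2 : B ⊆ Int ∪ fb F B := by
      intro t htB
      by_cases hs : F * {t} ⊆ B
      · exact Finset.mem_union_left _ (Finset.mem_filter.2 ⟨htB, hs⟩)
      · obtain ⟨x, hx, hxB⟩ := Finset.not_subset.1 hs
        refine Finset.mem_union_right _ (mem_fb.2 ⟨⟨1, hF1, by simpa using htB⟩,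
          ⟨x * t⁻¹, mem_mul_single.1 hx, by simpa [mul_assoc] using hxB⟩⟩)
    have := Finset.card_le_card hsub2
    have h3 := (Finset.card_union_le Int (fb F B)).trans' this
    have h4 : (B.card : ℝ) ≤ (Int.card : ℝ) + ((fb F B).card : ℝ) := by exact_mod_cast h3
    linarith
  refine ⟨L, hL, ?_⟩
  have : ε₀ * ((B.card : ℝ) - ((fb F B).card : ℝ)) ≤ ε₀ * (Int.card : ℝ) :=
    mul_le_mul_of_nonneg_left hBInt (le_of_lt hε₀)
  rw [← hA]
  linarith


lemma fb_TU_le (Fi F : Finset G) (L : List (G × Finset G)) :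
    (fb Fi (TU F L)).card ≤ L.length * (fb Fi F).card := by
  induction L with
  | nil =>
    have : TU F ([] : List (G × Finset G)) = ∅ := rfl
    rw [this]
    have : fb Fi (∅ : Finset G) = ∅ := by
      ext t; rw [mem_fb]; simp
    simp [this]
  | cons p L ih =>
    have he : TU F (p :: L) = F * {p.1} ∪ TU F L := rfl
    rw [he]
    calc (fb Fi (F * {p.1} ∪ TU F L)).card
        ≤ (fb Fi (F * {p.1}) ∪ fb Fi (TU F L)).card :=
          Finset.card_le_card (fb_union_subset _ _ _)
      _ ≤ (fb Fi (F * {p.1})).card + (fb Fi (TU F L)).card := Finset.card_union_le _ _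
      _ ≤ (fb Fi F).card + L.length * (fb Fi F).card := by
          rw [fb_mul_singleton, card_mul_singleton]
          omega
      _ = (p :: L).length * (fb Fi F).card := by rw [List.length_cons]; ring

lemma cores_biUnion (L : List (G × Finset G)) :
    ((L.map Prod.snd).toFinset).biUnion id = CU L := by
  ext a
  simp only [Finset.mem_biUnion, List.mem_toFinset, List.mem_map, id, mem_CU]
  constructor
  · rintro ⟨P, ⟨p, hp, rfl⟩, ha⟩; exact ⟨p, hp, ha⟩
  · rintro ⟨p, hp, ha⟩; exact ⟨p.2, ⟨p, hp, rfl⟩, ha⟩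

/-- The multiscale Ornstein-Weiss covering lemma. -/
lemma multiscale (ε₀ η ε' N : ℝ) (hε₀ : 0 < ε₀) (hε₀2 : ε₀ ≤ 1/2) (hη : 0 < η)
    (hηε : η ≤ ε'/16) (hε' : 0 < ε') (hN : 0 ≤ N) :
    ∀ l : List (Finset G), (∀ Fi ∈ l, (1:G) ∈ Fi) →
    List.Pairwise (fun Fi Fj => ((fb Fj Fi).card : ℝ) ≤ η * (Fi.card : ℝ)) l →
    ∀ B : Finset G, (B.card : ℝ) ≤ N →
    (∀ Fi ∈ l, ((fb Fi B).card : ℝ) ≤ (ε'/4) * N + 2 * η * (N - B.card)) →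
    ∃ Pc : Finset (Finset G),
      (∀ P ∈ Pc, ∃ Fi ∈ l, ∃ t : G, P ⊆ Fi * {t} ∧ (1 - ε₀) * (Fi.card : ℝ) ≤ (P.card : ℝ)) ∧
      ((Pc : Set (Finset G)).PairwiseDisjoint id) ∧
      (∀ P ∈ Pc, P ⊆ B) ∧
      ((B.card : ℝ) - ((Pc.biUnion id).card : ℝ) ≤
        max (ε' * N) ((1 - ε₀/2) ^ l.length * (B.card : ℝ))) := by
  intro l
  induction l with
  | nil =>
    intro _ _ B hBN _
    refine ⟨∅, by simp, by simp, by simp, ?_⟩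
    simp only [List.length_nil, pow_zero, one_mul, Finset.biUnion_empty, Finset.card_empty,
      Nat.cast_zero, sub_zero]
    exact le_max_right _ _
  | cons Fh lt ih =>
    intro hone hpair B hBN hbd
    have hpow1 : (1 - ε₀/2 : ℝ) ≤ 1 := by linarith
    have hpow0 : (0:ℝ) ≤ 1 - ε₀/2 := by linarith
    have hB0 : (0:ℝ) ≤ (B.card : ℝ) := Nat.cast_nonneg _
    have hFh1 : (1:G) ∈ Fh := hone Fh (List.mem_cons_self)
    -- greedy at the top scale
    obtain ⟨L, hLgood, hLcov⟩ := greedy ε₀ hε₀ (by linarith) Fh B hFh1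
    set A : Finset G := CU L with hA
    have hAB : A ⊆ B := hLgood.cu_subset
    set B' : Finset G := B \ A with hB'
    have hB'B : B' ⊆ B := Finset.sdiff_subset
    have hcardB' : (B'.card : ℝ) = (B.card : ℝ) - (A.card : ℝ) := by
      rw [hB', Finset.card_sdiff_of_subset hAB, Nat.cast_sub (Finset.card_le_card hAB)]
    -- mass bound
    have hmass : (L.length : ℝ) * (Fh.card : ℝ) ≤ 2 * (A.card : ℝ) := by
      have h := hLgood.2.2.2
      rw [← hA] at h
      nlinarith [Nat.cast_nonneg (α := ℝ) L.length, Nat.cast_nonneg (α := ℝ) Fh.card]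
    -- boundary bound for the remainder
    have hbd' : ∀ Fi ∈ lt, ((fb Fi B').card : ℝ) ≤ (ε'/4) * N + 2 * η * (N - B'.card) := by
      intro Fi hFi
      have h1 : (fb Fi B').card ≤ (fb Fi B).card + (fb Fi A).card := by
        calc (fb Fi B').card ≤ (fb Fi B ∪ fb Fi A).card :=
              Finset.card_le_card (fb_sdiff_subset _ _ _)
          _ ≤ _ := Finset.card_union_le _ _
      have h2 : ((fb Fi A).card : ℝ) ≤ 2 * η * (A.card : ℝ) := by
        have hAT : A = TU Fh L := by rw [hA, hLgood.2.2.1]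
        have h3 : (fb Fi A).card ≤ L.length * (fb Fi Fh).card := by
          rw [hAT]; exact fb_TU_le _ _ _
        have h4 : ((fb Fi Fh).card : ℝ) ≤ η * Fh.card :=
          (List.pairwise_cons.1 hpair).1 Fi hFi
        have h5 : ((fb Fi A).card : ℝ) ≤ (L.length : ℝ) * ((fb Fi Fh).card : ℝ) := by
          exact_mod_cast h3
        calc ((fb Fi A).card : ℝ) ≤ (L.length : ℝ) * ((fb Fi Fh).card : ℝ) := h5
          _ ≤ (L.length : ℝ) * (η * Fh.card) := by
              apply mul_le_mul_of_nonneg_left h4 (Nat.cast_nonneg _)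
          _ = η * ((L.length : ℝ) * (Fh.card : ℝ)) := by ring
          _ ≤ η * (2 * A.card) := by
              apply mul_le_mul_of_nonneg_left hmass (le_of_lt hη)
          _ = 2 * η * A.card := by ring
      have h6 : ((fb Fi B').card : ℝ) ≤ ((fb Fi B).card : ℝ) + ((fb Fi A).card : ℝ) := by
        exact_mod_cast h1
      have h7 := hbd Fi (List.mem_cons_of_mem _ hFi)
      rw [hcardB']
      linarith
    obtain ⟨Pct, hPct1, hPct2, hPct3, hPct4⟩ := ih (fun Fi hFi => hone Fi (List.mem_cons_of_mem _ hFi))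
      (List.pairwise_cons.1 hpair).2 B' (le_trans (by exact_mod_cast Finset.card_le_card hB'B) hBN)
      hbd'
    -- cores at the top scale
    set Qc : Finset (Finset G) := (L.map Prod.snd).toFinset with hQc
    have hQcU : Qc.biUnion id = A := by rw [hQc, cores_biUnion, hA]
    have hQcmem : ∀ P ∈ Qc, ∃ p ∈ L, p.2 = P := by
      intro P hP
      rw [hQc, List.mem_toFinset, List.mem_map] at hP
      exact hP
    have hQcsub : ∀ P ∈ Qc, P ⊆ A := by
      intro P hP a ha
      obtain ⟨p, hp, rfl⟩ := hQcmem P hP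
      rw [hA]; exact mem_CU.2 ⟨p, hp, ha⟩
    have hQcshape : ∀ P ∈ Qc, ∃ Fi ∈ (Fh :: lt), ∃ t : G,
        P ⊆ Fi * {t} ∧ (1 - ε₀) * (Fi.card : ℝ) ≤ (P.card : ℝ) := by
      intro P hP
      obtain ⟨p, hp, rfl⟩ := hQcmem P hP
      obtain ⟨_, hsub, hc⟩ := hLgood.1 p hp
      exact ⟨Fh, List.mem_cons_self, p.1, hsub, hc⟩
    have hQcdisj : (Qc : Set (Finset G)).PairwiseDisjoint id := by
      intro P hP Q hQ hPQ
      obtain ⟨p, hp, rfl⟩ := hQcmem P hP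
      obtain ⟨q, hq, rfl⟩ := hQcmem Q hQ
      have hne : p ≠ q := fun h => hPQ (by rw [h])
      haveI : Std.Symm (fun p q : G × Finset G => Disjoint p.2 q.2) := ⟨fun a b h => h.symm⟩
      exact hLgood.2.1.forall hp hq hne
    -- combine
    have hdisjAB' : ∀ Q ∈ Pct, Disjoint A Q := by
      intro Q hQ
      refine Finset.disjoint_left.2 (fun a haA haQ => ?_)
      have := hPct3 Q hQ haQ
      rw [hB', Finset.mem_sdiff] at this
      exact this.2 haA
    refine ⟨Qc ∪ Pct, ?_, ?_, ?_, ?_⟩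
    · intro P hP
      rcases Finset.mem_union.1 hP with hP | hP
      · exact hQcshape P hP
      · obtain ⟨Fi, hFi, t, h1, h2⟩ := hPct1 P hP
        exact ⟨Fi, List.mem_cons_of_mem _ hFi, t, h1, h2⟩
    · intro P hP Q hQ hPQ
      simp only [Finset.coe_union, Set.mem_union, Finset.mem_coe] at hP hQ
      rcases hP with hP | hP <;> rcases hQ with hQ | hQ
      · exact hQcdisj hP hQ hPQ
      · refine Finset.disjoint_left.2 (fun a haP haQ => ?_)
        have h := hPct3 Q hQ haQ
        rw [hB', Finset.mem_sdiff] at h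
        exact h.2 (hQcsub P hP haP)
      · refine Finset.disjoint_left.2 (fun a haP haQ => ?_)
        have h := hPct3 P hP haP
        rw [hB', Finset.mem_sdiff] at h
        exact h.2 (hQcsub Q hQ haQ)
      · exact hPct2 hP hQ hPQ
    · intro P hP
      rcases Finset.mem_union.1 hP with hP | hP
      · exact (hQcsub P hP).trans hAB
      · exact (hPct3 P hP).trans hB'B
    · -- coverage bound
      have hU : (Qc ∪ Pct).biUnion id = A ∪ Pct.biUnion id := by
        ext a
        simp only [Finset.mem_biUnion, Finset.mem_union, id]
        constructor
        · rintro ⟨P, hP | hP, ha⟩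
          · exact Or.inl (hQcsub P hP ha)
          · exact Or.inr ⟨P, hP, ha⟩
        · rintro (ha | ⟨P, hP, ha⟩)
          · rw [← hQcU] at ha
            obtain ⟨P, hP, ha⟩ := Finset.mem_biUnion.1 ha
            exact ⟨P, Or.inl hP, ha⟩
          · exact ⟨P, Or.inr hP, ha⟩
      have hdisjU : Disjoint A (Pct.biUnion id) := by
        refine Finset.disjoint_left.2 (fun a haA haU => ?_)
        obtain ⟨P, hP, ha⟩ := Finset.mem_biUnion.1 haU
        exact Finset.disjoint_left.1 (hdisjAB' P hP) haA ha
      have hcardU : (((Qc ∪ Pct).biUnion id).card : ℝ) = (A.card : ℝ) + ((Pct.biUnion id).card : ℝ) := by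
        rw [hU, Finset.card_union_of_disjoint hdisjU]
        push_cast; ring
      rw [hcardU]
      have hkey : (B'.card : ℝ) - ((Pct.biUnion id).card : ℝ) ≤
          max (ε' * N) ((1 - ε₀/2) ^ lt.length * (B'.card : ℝ)) := hPct4
      by_cases hcase : (B.card : ℝ) ≤ ε' * N
      · have h1 : (1 - ε₀/2) ^ lt.length * (B'.card : ℝ) ≤ ε' * N := by
          calc (1 - ε₀/2) ^ lt.length * (B'.card : ℝ) ≤ 1 * (B'.card : ℝ) := by
                apply mul_le_mul_of_nonneg_right (pow_le_one₀ hpow0 hpow1) (Nat.cast_nonneg _)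
            _ ≤ (B.card : ℝ) := by
                rw [one_mul]; exact_mod_cast Finset.card_le_card hB'B
            _ ≤ ε' * N := hcase
        have h2 : (B'.card : ℝ) - ((Pct.biUnion id).card : ℝ) ≤ ε' * N :=
          le_trans hkey (max_le (le_refl _) h1)
        refine le_trans ?_ (le_max_left _ _)
        rw [hcardB'] at h2
        linarith
      · push_neg at hcase
        have hfbB : ((fb Fh B).card : ℝ) < (3/8) * (B.card : ℝ) := by
          have h1 := hbd Fh (List.mem_cons_self)
          have h2 : (ε'/4) * N + 2 * η * (N - B.card) ≤ (3 * ε'/8) * N := by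
            nlinarith
          calc ((fb Fh B).card : ℝ) ≤ (3 * ε'/8) * N := le_trans h1 h2
            _ < (3/8) * (B.card : ℝ) := by nlinarith
        have hAcov : (ε₀/2) * (B.card : ℝ) ≤ (A.card : ℝ) := by
          nlinarith [hLcov]
        have hB'small : (B'.card : ℝ) ≤ (1 - ε₀/2) * (B.card : ℝ) := by
          rw [hcardB']; linarith
        have h1 : (1 - ε₀/2) ^ lt.length * (B'.card : ℝ) ≤
            (1 - ε₀/2) ^ (Fh :: lt).length * (B.card : ℝ) := by
          rw [List.length_cons, pow_succ]
          calc (1 - ε₀/2) ^ lt.length * (B'.card : ℝ)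
              ≤ (1 - ε₀/2) ^ lt.length * ((1 - ε₀/2) * (B.card : ℝ)) :=
                mul_le_mul_of_nonneg_left hB'small (pow_nonneg hpow0 _)
            _ = (1 - ε₀/2) ^ lt.length * (1 - ε₀/2) * (B.card : ℝ) := by ring
        have h2 := le_trans hkey (max_le_max (le_refl (ε' * N)) h1)
        rw [hcardB'] at h2
        linarith

lemma kB_mono {K K' F : Set G} (h : K ⊆ K') : kBoundary K F ⊆ kBoundary K' F := by
  rintro t ⟨⟨k, hk, h1⟩, ⟨k', hk', h2⟩⟩
  exact ⟨⟨k, h hk, h1⟩, ⟨k', h hk', h2⟩⟩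

lemma mem_foldr_union {l : List (Finset G)} {Fi : Finset G} (h : Fi ∈ l) :
    Fi ⊆ l.foldr (· ∪ ·) ∅ := by
  induction l with
  | nil => simp at h
  | cons Fh lt ih =>
    rcases List.mem_cons.1 h with rfl | h
    · exact Finset.subset_union_left
    · exact (ih h).trans Finset.subset_union_right

lemma folner_to_fb {X F : Finset G} {d : ℝ} (h : FolnerInvariant (↑X : Set G) (↑F : Set G) d) :
    ((fb X F).card : ℝ) ≤ d * F.card := by
  unfold FolnerInvariant at h
  rwa [← fb_card_eq, Set.ncard_coe_finset] at h

lemma fb_to_folner {X F : Finset G} {d : ℝ} (h : ((fb X F).card : ℝ) ≤ d * F.card) :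
    FolnerInvariant (↑X : Set G) (↑F : Set G) d := by
  unfold FolnerInvariant
  rwa [← fb_card_eq, Set.ncard_coe_finset]

/-- Construction of the Følner chain. -/
lemma build_seq (hG : AmenableGroup G) (K : Finset G) (δ' η' : ℝ) (hδ' : 0 < δ')
    (hη' : 0 < η') : ∀ m : ℕ, ∃ l : List (Finset G), l.length = m ∧
    (∀ Fi ∈ l, (1:G) ∈ Fi) ∧
    (∀ Fi ∈ l, ((fb K Fi).card : ℝ) ≤ δ' * Fi.card) ∧
    List.Pairwise (fun Fi Fj => ((fb Fj Fi).card : ℝ) ≤ η' * (Fi.card : ℝ)) l := by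
  intro m
  induction m with
  | zero => exact ⟨[], rfl, by simp, by simp, List.Pairwise.nil⟩
  | succ n ih =>
    obtain ⟨l, hlen, hone, hKinv, hpair⟩ := ih
    set U : Finset G := l.foldr (· ∪ ·) ∅ with hU
    set K' : Finset G := K ∪ U with hK'
    have hd : (0:ℝ) < min δ' η' := lt_min hδ' hη'
    obtain ⟨F, hFfin, hFne, hFol⟩ := hG (↑K') (K'.finite_toSet) (min δ' η') hd
    obtain ⟨f, hf⟩ := hFne
    set F₁ : Set G := (fun s => s * f⁻¹) '' F with hF₁
    have hF₁fin : F₁.Finite := hFfin.image _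
    have h1F₁ : (1:G) ∈ F₁ := ⟨f, hf, by group⟩
    have hFol₁ : FolnerInvariant (↑K' : Set G) F₁ (min δ' η') :=
      folner_translate hFol (le_of_lt hd) f⁻¹
    set Fh : Finset G := hF₁fin.toFinset with hFh
    have hcoe : (↑Fh : Set G) = F₁ := hF₁fin.coe_toFinset
    have hFolh : ((fb K' Fh).card : ℝ) ≤ (min δ' η') * Fh.card :=
      folner_to_fb (by rw [hcoe]; exact hFol₁)
    have hFh1 : (1:G) ∈ Fh := by rw [← Finset.mem_coe, hcoe]; exact h1F₁
    have hFhc0 : (0:ℝ) ≤ (Fh.card : ℝ) := Nat.cast_nonneg _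
    refine ⟨Fh :: l, by simp [hlen], ?_, ?_, ?_⟩
    · intro Fi hFi
      rcases List.mem_cons.1 hFi with rfl | hFi
      · exact hFh1
      · exact hone Fi hFi
    · intro Fi hFi
      rcases List.mem_cons.1 hFi with rfl | hFi
      · calc ((fb K Fh).card : ℝ) ≤ ((fb K' Fh).card : ℝ) := by
              exact_mod_cast Finset.card_le_card (fb_mono _ Finset.subset_union_left)
          _ ≤ (min δ' η') * Fh.card := hFolh
          _ ≤ δ' * Fh.card := mul_le_mul_of_nonneg_right (min_le_left _ _) hFhc0
      · exact hKinv Fi hFi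
    · rw [List.pairwise_cons]
      refine ⟨fun Fi hFi => ?_, hpair⟩
      have hsub : Fi ⊆ K' := (mem_foldr_union hFi).trans Finset.subset_union_right
      calc ((fb Fi Fh).card : ℝ) ≤ ((fb K' Fh).card : ℝ) := by
            exact_mod_cast Finset.card_le_card (fb_mono _ hsub)
        _ ≤ (min δ' η') * Fh.card := hFolh
        _ ≤ η' * Fh.card := mul_le_mul_of_nonneg_right (min_le_right _ _) hFhc0

lemma image_coe_mul (X : Finset G) (t : G) :
    (fun s => s * t) '' (↑X : Set G) = ↑(X * {t}) := by
  ext a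
  constructor
  · rintro ⟨x, hx, rfl⟩
    rw [Finset.mem_coe, mem_mul_single]
    simpa using hx
  · intro ha
    rw [Finset.mem_coe, mem_mul_single] at ha
    exact ⟨a * t⁻¹, ha, by group⟩

lemma mul_single_cancel (P : Finset G) (g : G) : P * {g⁻¹} * {g} = P := by
  ext x
  rw [mem_mul_single, mem_mul_single]
  constructor
  · intro h
    have : x * g⁻¹ * g⁻¹⁻¹ = x := by group
    rwa [this] at h
  · intro h
    have : x * g⁻¹ * g⁻¹⁻¹ = x := by group
    rwa [this]

end OW

open OW in
/-- Ornstein–Weiss tiling corollary: in an amenable group, for `0 < ε < 1/2`, finite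
`K ⊆ G` and `δ > 0`, there is a finite collection `𝓕` of `(K, δ)`-invariant finite
subsets of `G` containing the identity such that every `(⋃𝓕, ε/4)`-invariant finite
set `E ⊆ G` has an `𝓕`-tileable subset `E'` with `|E'| ≥ (1-ε)|E|`. -/
theorem ornstein_weiss_tileable {G : Type*} [Group G] (hG : AmenableGroup G)
    (ε : ℝ) (hε0 : 0 < ε) (hε : ε < 1 / 2) (K : Set G) (hK : K.Finite)
    (δ : ℝ) (hδ : 0 < δ) :
    ∃ 𝓕 : Set (Set G), 𝓕.Finite ∧ (∀ F ∈ 𝓕, F.Finite ∧ FolnerInvariant K F δ) ∧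
      (1 : G) ∈ ⋃₀ 𝓕 ∧
      ∀ E : Set G, E.Finite → FolnerInvariant (⋃₀ 𝓕) E (ε / 4) →
        ∃ E' ⊆ E, Tileable 𝓕 E' ∧ (1 - ε) * (E.ncard : ℝ) ≤ (E'.ncard : ℝ) := by
  classical
  letI : DecidableEq G := Classical.decEq G
  set KF : Finset G := hK.toFinset with hKF
  have hKcoe : (↑KF : Set G) = K := hK.coe_toFinset
  set c : ℝ := (KF.card : ℝ) with hcdef
  have hc0 : 0 ≤ c := Nat.cast_nonneg _
  set ε₀ : ℝ := min ε (δ / (4 * (c + 1))) with hε₀def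
  have hε₀pos : 0 < ε₀ := lt_min hε0 (by positivity)
  have hε₀ε : ε₀ ≤ ε := min_le_left _ _
  have hε₀half : ε₀ ≤ 1/2 := by linarith
  have hKε : c * ε₀ ≤ δ / 4 := by
    have h : ε₀ ≤ δ / (4 * (c + 1)) := min_le_right _ _
    have h2 : ε₀ * (4 * (c + 1)) ≤ δ := by
      rw [← le_div_iff₀ (by positivity)]
      exact h
    nlinarith
  set η : ℝ := ε / 16 with hηdef
  have hη : 0 < η := by positivity
  obtain ⟨n, hn⟩ := exists_pow_lt_of_lt_one hε0 (show 1 - ε₀/2 < 1 by linarith)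
  set m := n + 1 with hm
  have hpow0 : (0:ℝ) ≤ 1 - ε₀/2 := by linarith
  have hpowm : (1 - ε₀/2) ^ m ≤ ε :=
    le_of_lt (lt_of_le_of_lt (pow_le_pow_of_le_one hpow0 (by linarith) (Nat.le_succ n)) hn)
  obtain ⟨l, hlen, hone, hKinv, hpair⟩ := build_seq hG KF (δ/4) η (by positivity) hη m
  obtain ⟨F0, hF0⟩ : ∃ F0, F0 ∈ l := by
    cases l with
    | nil => simp [hm] at hlen
    | cons a l => exact ⟨a, List.mem_cons_self⟩
  set 𝓕 : Set (Set G) := {S | ∃ Fi ∈ l, ∃ F' : Finset G, F' ⊆ Fi ∧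
    (1 - ε₀) * (Fi.card : ℝ) ≤ (F'.card : ℝ) ∧ ∃ c' ∈ F', S = ↑(F' * {c'⁻¹})} with h𝓕def
  -- each Fi belongs to 𝓕
  have hFi𝓕 : ∀ Fi ∈ l, (↑Fi : Set G) ∈ 𝓕 := by
    intro Fi hFi
    have hFi1 : Fi * {(1:G)⁻¹} = Fi := by
      ext a
      rw [mem_mul_single]
      simp
    refine ⟨Fi, hFi, Fi, Finset.Subset.refl _, ?_, 1, hone Fi hFi, by rw [hFi1]⟩
    nlinarith [Nat.cast_nonneg (α := ℝ) Fi.card]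
  have h𝓕fin : 𝓕.Finite := by
    set U : Finset G := l.foldr (· ∪ ·) ∅ with hU
    apply Set.Finite.subset (Set.Finite.image
      (fun p : Finset G × G => (↑(p.1 * {p.2⁻¹}) : Set G)) (U.powerset ×ˢ U).finite_toSet)
    rintro S ⟨Fi, hFi, F', hsub, hcard, c', hc', rfl⟩
    refine ⟨(F', c'), ?_, rfl⟩
    rw [Finset.mem_coe, Finset.mem_product, Finset.mem_powerset]
    exact ⟨hsub.trans (mem_foldr_union hFi), (hsub.trans (mem_foldr_union hFi)) hc'⟩
  have h𝓕prop : ∀ S ∈ 𝓕, S.Finite ∧ FolnerInvariant K S δ := by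
    rintro S ⟨Fi, hFi, F', hsub, hcard, c', hc', rfl⟩
    refine ⟨(F' * {c'⁻¹}).finite_toSet, ?_⟩
    rw [← hKcoe]
    apply fb_to_folner
    rw [fb_mul_singleton, card_mul_singleton, card_mul_singleton]
    exact shape_invariant KF Fi F' δ ε₀ hδ hKε hε₀half (hKinv Fi hFi) hsub hcard
  have h1𝓕 : (1 : G) ∈ ⋃₀ 𝓕 := by
    refine ⟨↑F0, hFi𝓕 F0 hF0, ?_⟩
    exact hone F0 hF0
  refine ⟨𝓕, h𝓕fin, h𝓕prop, h1𝓕, ?_⟩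
  intro E hE hEinv
  set EF : Finset G := hE.toFinset with hEF
  have hEcoe : (↑EF : Set G) = E := hE.coe_toFinset
  set N : ℝ := (EF.card : ℝ) with hNdef
  have hN0 : 0 ≤ N := Nat.cast_nonneg _
  have hSfin : (⋃₀ 𝓕).Finite := Set.Finite.sUnion h𝓕fin (fun S hS => (h𝓕prop S hS).1)
  have hbdE : ∀ Fi ∈ l, ((fb Fi EF).card : ℝ) ≤ (ε/4) * N := by
    intro Fi hFi
    have hsubS : (↑Fi : Set G) ⊆ ⋃₀ 𝓕 := fun x hx => ⟨↑Fi, hFi𝓕 Fi hFi, hx⟩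
    have h1 : kBoundary (↑Fi : Set G) (↑EF : Set G) ⊆ kBoundary (⋃₀ 𝓕) E := by
      rw [← hEcoe]
      exact kB_mono hsubS
    have h2 : (kBoundary (↑Fi : Set G) (↑EF : Set G)).ncard ≤ (kBoundary (⋃₀ 𝓕) E).ncard :=
      Set.ncard_le_ncard h1 (kB_finite hSfin hE)
    have h3 : ((kBoundary (⋃₀ 𝓕) E).ncard : ℝ) ≤ (ε/4) * E.ncard := hEinv
    have h4 : (E.ncard : ℝ) = N := by rw [← hEcoe, Set.ncard_coe_finset]
    calc ((fb Fi EF).card : ℝ) = ((kBoundary (↑Fi : Set G) (↑EF : Set G)).ncard : ℝ) := by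
          rw [fb_card_eq]
      _ ≤ ((kBoundary (⋃₀ 𝓕) E).ncard : ℝ) := by exact_mod_cast h2
      _ ≤ (ε/4) * E.ncard := h3
      _ = (ε/4) * N := by rw [h4]
  obtain ⟨Pc, hPc1, hPc2, hPc3, hPc4⟩ := multiscale ε₀ η ε N hε₀pos hε₀half hη
    (le_refl _) hε0 hN0 l hone hpair EF (le_refl _)
    (by
      intro Fi hFi
      have := hbdE Fi hFi
      have he : N - (EF.card : ℝ) = 0 := by rw [hNdef]; ring
      rw [he]
      linarith)
  set E' : Set G := (↑(Pc.biUnion id) : Set G) with hE'def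
  have hE'E : E' ⊆ E := by
    intro a ha
    rw [hE'def, Finset.coe_biUnion] at ha
    obtain ⟨P, hP, haP⟩ := Set.mem_iUnion₂.1 ha
    rw [← hEcoe]
    exact hPc3 P hP haP
  -- nonemptiness of cores
  have hPne : ∀ P ∈ Pc, P.Nonempty := by
    intro P hP
    obtain ⟨Fi, hFi, t, hsub, hcard⟩ := hPc1 P hP
    have h1 : (1:ℝ) ≤ (Fi.card : ℝ) := by
      exact_mod_cast Finset.card_pos.2 ⟨1, hone Fi hFi⟩
    have h2 : (0:ℝ) < (P.card : ℝ) := by nlinarith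
    exact Finset.card_pos.1 (by exact_mod_cast h2)
  set pick : Finset G → G := fun P => if h : P.Nonempty then h.choose else 1 with hpickdef
  have hpick : ∀ P ∈ Pc, pick P ∈ P := by
    intro P hP
    have h := hPne P hP
    simp only [hpickdef, dif_pos h]
    exact h.choose_spec
  have huniq : ∀ P ∈ Pc, ∀ Q ∈ Pc, pick P ∈ Q → Q = P := by
    intro P hP Q hQ hmem
    by_contra hne
    exact Finset.disjoint_left.1 (hPc2 hQ hP hne) hmem (hpick P hP)
  have hpickinj : ∀ P ∈ Pc, ∀ Q ∈ Pc, pick P = pick Q → P = Q := by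
    intro P hP Q hQ he
    have := huniq P hP Q hQ (he ▸ hpick Q hQ)
    exact this.symm
  set T : Set G := pick '' (↑Pc : Set (Finset G)) with hTdef
  set Ft : G → Set G := fun t =>
    (↑(((Pc.filter (fun P => t ∈ P)).biUnion id) * {t⁻¹}) : Set G) with hFtdef
  have hfilter : ∀ P ∈ Pc, Pc.filter (fun Q => pick P ∈ Q) = {P} := by
    intro P hP
    ext Q
    rw [Finset.mem_filter, Finset.mem_singleton]
    constructor
    · rintro ⟨h1, h2⟩
      exact huniq P hP Q h1 h2
    · rintro rfl
      exact ⟨hP, hpick _ hP⟩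
  have hFt : ∀ P ∈ Pc, Ft (pick P) = ↑(P * {(pick P)⁻¹}) := by
    intro P hP
    rw [hFtdef]
    simp only
    rw [hfilter P hP, Finset.singleton_biUnion]
    rfl
  refine ⟨E', hE'E, ⟨T, Ft, ?_, ?_, ?_⟩, ?_⟩
  · -- tiles in 𝓕
    rintro t ⟨P, hPmem, rfl⟩
    have hP : P ∈ Pc := hPmem
    rw [hFt P hP]
    obtain ⟨Fi, hFi, t₀, hsub, hcard⟩ := hPc1 P hP
    refine ⟨Fi, hFi, P * {t₀⁻¹}, ?_, ?_, pick P * t₀⁻¹, ?_, ?_⟩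
    · intro x hx
      rw [mem_mul_single] at hx
      have hx2 : x * t₀ ∈ P := by rwa [inv_inv] at hx
      have hx3 := hsub hx2
      rw [mem_mul_single] at hx3
      have : x * t₀ * t₀⁻¹ = x := by group
      rwa [this] at hx3
    · rw [card_mul_singleton]; exact hcard
    · rw [mem_mul_single]
      have : pick P * t₀⁻¹ * t₀⁻¹⁻¹ = pick P := by group
      rw [this]
      exact hpick P hP
    · congr 1
      have h1 : P * {t₀⁻¹} * {(pick P * t₀⁻¹)⁻¹} = P * ({t₀⁻¹} * {(pick P * t₀⁻¹)⁻¹}) :=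
        mul_assoc _ _ _
      rw [h1, Finset.singleton_mul_singleton]
      congr 2
      group
  · -- union
    ext a
    rw [hE'def, Finset.coe_biUnion]
    simp only [Set.mem_iUnion, Finset.mem_coe, id]
    constructor
    · rintro ⟨P, hP, haP⟩
      refine ⟨pick P, ⟨P, hP, rfl⟩, ?_⟩
      rw [hFt P hP, image_coe_mul, mul_single_cancel]
      exact haP
    · rintro ⟨t, ⟨P, hPmem, rfl⟩, ha⟩
      have hP : P ∈ Pc := hPmem
      rw [hFt P hP, image_coe_mul, mul_single_cancel] at ha
      exact ⟨P, hP, ha⟩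
  · -- pairwise disjoint
    rintro t1 ⟨P, hPmem, rfl⟩ t2 ⟨Q, hQmem, rfl⟩ hne
    have hP : P ∈ Pc := hPmem
    have hQ : Q ∈ Pc := hQmem
    have hPQ : P ≠ Q := fun h => hne (by rw [h])
    have h1 : (fun s => s * pick P) '' Ft (pick P) = ↑P := by
      rw [hFt P hP, image_coe_mul, mul_single_cancel]
    have h2 : (fun s => s * pick Q) '' Ft (pick Q) = ↑Q := by
      rw [hFt Q hQ, image_coe_mul, mul_single_cancel]
    simp only [Function.onFun] at *
    rw [h1, h2]
    exact Finset.disjoint_coe.2 (hPc2 hP hQ hPQ)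
  · -- cardinality
    have hlenm : l.length = m := hlen
    have h1 : (1 - ε₀/2) ^ l.length * (EF.card : ℝ) ≤ ε * N := by
      rw [hlenm]
      calc (1 - ε₀/2) ^ m * (EF.card : ℝ) ≤ ε * (EF.card : ℝ) :=
            mul_le_mul_of_nonneg_right hpowm (Nat.cast_nonneg _)
        _ = ε * N := rfl
    have h2 : N - ((Pc.biUnion id).card : ℝ) ≤ ε * N :=
      le_trans hPc4 (max_le (le_refl _) h1)
    have h3 : (E'.ncard : ℝ) = ((Pc.biUnion id).card : ℝ) := by
      rw [hE'def, Set.ncard_coe_finset]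
    have h4 : (E.ncard : ℝ) = N := by rw [← hEcoe, Set.ncard_coe_finset]
    rw [h3, h4]
    linarith
end

section
/- Let G be a group, let 𝓕 be a collection of finite subsets of G, and let A ⊆ G be 𝓕-tileable, witnessed by T ⊆ G and F_t ∈ 𝓕 (t ∈ T) with A = ⨆_{t∈T} F_t t. Let S ⊆ G be finite and let D = (⋃𝓕)(⋃𝓕)⁻¹. If for some t ∈ T the tile F_t t intersects S ∖ ∂_D S, then F_t t ⊆ S. -/
open Set
open scoped Pointwise

section kBoundary

variable {G : Type*} [Group G]

theorem mul_mem_of_notMem_kBoundary {K S : Set G} {s k₀ : G} (hs : s ∉ kBoundary K S)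
    (hk₀ : k₀ ∈ K) (hk₀s : k₀ * s ∈ S) {k : G} (hk : k ∈ K) : k * s ∈ S := by
  by_contra hks
  exact hs ⟨⟨k₀, hk₀, hk₀s⟩, ⟨k, hk, hks⟩⟩

/-- Each `x ∈ X` is `(x s⁻¹) s` with `x s⁻¹ ∈ K`, and `s s⁻¹ = 1 ∈ K` shows that `K s` meets `S`. -/
theorem subset_of_mul_inv_subset_of_inter_sdiff_kBoundary_nonempty {K S X : Set G}
    (hX : X * X⁻¹ ⊆ K) (hmeet : (X ∩ (S \ kBoundary K S)).Nonempty) : X ⊆ S := by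
  obtain ⟨s, hsX, hsS, hsB⟩ := hmeet
  have hK : ∀ x ∈ X, x * s⁻¹ ∈ K := fun x hx => hX (mul_mem_mul hx (inv_mem_inv.mpr hsX))
  intro x hx
  have hxs : x * s⁻¹ * s ∈ S :=
    mul_mem_of_notMem_kBoundary hsB (hK s hsX) (by simpa using hsS) (hK x hx)
  simpa using hxs

theorem image_mul_right_mul_inv_subset (F : Set G) (t : G) :
    ((fun s => s * t) '' F) * ((fun s => s * t) '' F)⁻¹ ⊆ F * F⁻¹ := by
  rintro _ ⟨_, ⟨a, ha, rfl⟩, y, hy, rfl⟩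
  obtain ⟨b, hb, hbt⟩ := hy
  refine ⟨a, ha, b⁻¹, inv_mem_inv.mpr hb, ?_⟩
  simp only at hbt ⊢
  rw [← inv_inv y, ← hbt]
  group

end kBoundary

theorem tile_inside_general {G : Type*} [Group G] (𝓕 : Set (Set G))
    (T : Set G) (Ft : G → Set G) (hFt : ∀ t ∈ T, Ft t ∈ 𝓕)
    (S : Set G)
    (t : G) (ht : t ∈ T)
    (hmeet : (((fun s => s * t) '' Ft t) ∩ (S \ kBoundary ((⋃₀ 𝓕) * (⋃₀ 𝓕)⁻¹) S)).Nonempty) :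
    (fun s => s * t) '' Ft t ⊆ S := by
  have hF : Ft t ⊆ ⋃₀ 𝓕 := subset_sUnion_of_mem (hFt t ht)
  refine subset_of_mul_inv_subset_of_inter_sdiff_kBoundary_nonempty ?_ hmeet
  exact (image_mul_right_mul_inv_subset _ t).trans (mul_subset_mul hF (inv_subset_inv.mpr hF))

/-- Let `A ⊆ G` be `𝓕`-tileable, witnessed by `T` and tiles `F_t t` partitioning `A`,
let `S ⊆ G` be finite, and let `D = (⋃𝓕)(⋃𝓕)⁻¹`. If for some `t ∈ T` the tile `F_t t`
meets `S ∖ ∂_D S`, then `F_t t ⊆ S`. -/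
theorem tile_inside {G : Type*} [Group G] (𝓕 : Set (Set G)) (A : Set G)
    (T : Set G) (Ft : G → Set G) (hFt : ∀ t ∈ T, Ft t ∈ 𝓕)
    (hA : A = ⋃ t ∈ T, (fun s => s * t) '' Ft t)
    (hdisj : T.PairwiseDisjoint fun t => (fun s => s * t) '' Ft t)
    (S : Set G) (hS : S.Finite)
    (t : G) (ht : t ∈ T)
    (hmeet : (((fun s => s * t) '' Ft t) ∩ (S \ kBoundary ((⋃₀ 𝓕) * (⋃₀ 𝓕)⁻¹) S)).Nonempty) :
    (fun s => s * t) '' Ft t ⊆ S :=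
  tile_inside_general 𝓕 T Ft hFt S t ht hmeet
end
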